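/- arXiv:1406.4634 — 3 statements merged into one kernel-verified Lean document; each statement's English description precedes it below -/
import Mathlib

section
/- Let f be a nonzero algebraic power series over a field k in variables x₁,…,xₙ, with minimal polynomial P(x,T) = a_d(x)T^d + ⋯ + a_0(x) ∈ k[x][T]. Then the (x)-adic order of f is at most the height of f, i.e., ord(f) ≤ max_i deg(a_i). -/
/-!
If every monomial of degree `≤ H(f)` had zero coefficient in `f`, then evaluating
`P = a₀ + T·Q` at `f` would give `a₀ = -f·Q(f)`, so `ord(a₀) ≥ ord(f) > H(f) ≥ deg a₀`,
forcing `a₀ = 0`. But `a₀ ≠ 0`: otherwise `T` divides `P`, and minimality of `P`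
together with `f ≠ 0` would make `P` divide `P / T`.
-/

open Polynomial MvPowerSeries

noncomputable section

variable {k : Type*} [Field k] {σ : Type*}

/-- Evaluation of a polynomial `P ∈ k[x][T]` at a power series `f ∈ k⟦x⟧`. -/
def pEval (P : Polynomial (MvPolynomial σ k)) (f : MvPowerSeries σ k) :
    MvPowerSeries σ k :=
  (P.map MvPolynomial.coeToMvPowerSeries.ringHom).eval f

/-- `P` is (a) minimal polynomial of the power series `f`:
it is nonzero, annihilates `f`, and generates the ideal of annihilators of `f`. -/
def IsMinPolyOf (P : Polynomial (MvPolynomial σ k)) (f : MvPowerSeries σ k) : Prop :=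
  P ≠ 0 ∧ pEval P f = 0 ∧ ∀ Q : Polynomial (MvPolynomial σ k), pEval Q f = 0 → P ∣ Q

/-- The height of `P ∈ k[x][T]`: the maximum of the total degrees of its coefficients. -/
def heightP (P : Polynomial (MvPolynomial σ k)) : ℕ :=
  (Finset.range (P.natDegree + 1)).sup fun i => (P.coeff i).totalDegree

theorem IsMinPolyOf.coeff_zero_ne_zero {P : Polynomial (MvPolynomial σ k)}
    {f : MvPowerSeries σ k} (hP : IsMinPolyOf P f) (hf : f ≠ 0) : P.coeff 0 ≠ 0 := by
  obtain ⟨hP0, hPf, hmin⟩ := hP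
  intro h0
  obtain ⟨Q, rfl⟩ := Polynomial.X_dvd_iff.mpr h0
  have hQ : Q ≠ 0 := right_ne_zero_of_mul hP0
  have hfQf : f * pEval Q f = 0 := by simpa [pEval] using hPf
  have hQf : pEval Q f = 0 := (mul_eq_zero.mp hfQf).resolve_left hf
  have hX : (Polynomial.X : Polynomial (MvPolynomial σ k)) ∣ 1 :=
    (mul_dvd_mul_iff_right hQ).mp (by rw [one_mul]; exact hmin Q hQf)
  exact Polynomial.not_isUnit_X (isUnit_of_dvd_one hX)

theorem MvPolynomial.order_coe_le_totalDegree {R σ : Type*} [CommSemiring R]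
    {p : MvPolynomial σ R} (hp : p ≠ 0) : (p : MvPowerSeries σ R).order ≤ p.totalDegree := by
  obtain ⟨d, hd⟩ := MvPolynomial.ne_zero_iff.mp hp
  calc (p : MvPowerSeries σ R).order ≤ d.degree :=
        MvPowerSeries.order_le (by rwa [MvPolynomial.coeff_coe])
    _ ≤ p.totalDegree := by
        exact_mod_cast MvPolynomial.le_totalDegree (MvPolynomial.mem_support_iff.mpr hd)

theorem Polynomial.order_le_order_coeff_zero_of_eval_eq_zero {R σ : Type*} [CommRing R]
    {p : (MvPowerSeries σ R)[X]} {f : MvPowerSeries σ R} (h : p.eval f = 0) :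
    f.order ≤ (p.coeff 0).order := by
  have hcoeff : p.coeff 0 = -(p.divX.eval f * f) := by
    have := congrArg (eval f) (Polynomial.divX_mul_X_add p)
    rw [h, eval_add, eval_mul, eval_X, eval_C] at this
    exact eq_neg_of_add_eq_zero_right this
  calc f.order ≤ (p.divX.eval f).order + f.order := le_add_self
    _ ≤ (p.coeff 0).order := by rw [hcoeff, order_neg]; exact le_order_mul

theorem totalDegree_coeff_le_heightP (P : Polynomial (MvPolynomial σ k)) {i : ℕ}
    (hi : i ≤ P.natDegree) :
    (P.coeff i).totalDegree ≤ heightP P :=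
  Finset.le_sup (f := fun i => (P.coeff i).totalDegree) (Finset.mem_range_succ_iff.mpr hi)

/-- If `f` is a nonzero algebraic power series with minimal polynomial `P`,
then `ord(f) ≤ H(f)`: there is an exponent `d` of total degree at most `H(f)` whose
coefficient in `f` is nonzero. -/
theorem ord_le_height {n : ℕ} (f : MvPowerSeries (Fin n) k) (hf : f ≠ 0)
    (P : Polynomial (MvPolynomial (Fin n) k)) (hP : IsMinPolyOf P f) :
    ∃ d : Fin n →₀ ℕ, MvPowerSeries.coeff d f ≠ 0 ∧ (d.sum fun _ m => m) ≤ heightP P := by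
  have hord : f.order ≤ heightP P :=
    calc f.order ≤ ((P.coeff 0 : MvPolynomial (Fin n) k) : MvPowerSeries (Fin n) k).order := by
          simpa [pEval, Polynomial.coeff_map] using
            Polynomial.order_le_order_coeff_zero_of_eval_eq_zero hP.2.1
      _ ≤ (P.coeff 0).totalDegree :=
          MvPolynomial.order_coe_le_totalDegree (hP.coeff_zero_ne_zero hf)
      _ ≤ heightP P := by exact_mod_cast totalDegree_coeff_le_heightP P (Nat.zero_le _)
  obtain ⟨d, hd, hdeg⟩ := exists_coeff_ne_zero_and_order (ne_zero_iff_order_finite.mp hf)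
  exact ⟨d, hd, by exact_mod_cast hdeg.trans_le hord⟩
end
end

section
/- Let f(x,y) be an algebraic power series (y a single variable) and q a positive integer. Then f(x,y^q) is an algebraic power series, Deg(f(x,y^q)) = Deg(f(x,y)), and H(f(x,y)) ≤ H(f(x,y^q)) ≤ q·H(f(x,y)). Moreover, P(x,y,T) is the minimal polynomial of f(x,y) if and only if P(x,y^q,T) is the minimal polynomial of f(x,y^q). -/
open Polynomial MvPowerSeries

noncomputable section

variable {k : Type*} [Field k] {σ : Type*}

/-- `f(x, y^q)`, where the distinguished variable `y` has index `0` among the `n+1`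
variables `(y, x₁, …, xₙ)`. -/
def expandY {n : ℕ} (q : ℕ) (f : MvPowerSeries (Fin (n + 1)) k) :
    MvPowerSeries (Fin (n + 1)) k :=
  fun d => if q ∣ d 0 then
    MvPowerSeries.coeff (R := k) (Finsupp.update d 0 (d 0 / q)) f else 0

/-- The algebra endomorphism of `k[y, x₁, …, xₙ]` replacing `y` by `y^q`. -/
def expVar {n : ℕ} (q : ℕ) : MvPolynomial (Fin (n + 1)) k →ₐ[k] MvPolynomial (Fin (n + 1)) k :=
  MvPolynomial.aeval fun i => if i = 0 then MvPolynomial.X 0 ^ q else MvPolynomial.X i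

/-!
Write `y = X 0`. Every `p ∈ k[x, y]` is uniquely a sum `∑_{j<q} y^j p_j(x, y^q)`: `k[x, y]` is
free over `k[x, y^q]` with basis `1, y, …, y^{q-1}`. Uniqueness persists for power series
`∑_{j<q} y^j g_j(x, y^q)`, since the `y`-exponents occurring in the `j`-th summand are exactly
those `≡ j mod q`. Decomposing the coefficients of `Q(x, y, T)` in this way gives
`Q(x, y, f(x, y^q)) = ∑_j y^j Q_j(x, y^q, f(x, y^q))`, so `Q` annihilates `f(x, y^q)` iff every
`Q_j` annihilates `f`, i.e. iff `P ∣ Q_j` for all `j`, and then `P(x, y^q, T) ∣ Q`.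
Substituting `y ↦ y^q` is injective and multiplies the `y`-degree of every monomial by `q`,
which gives the degree and height statements.
-/

section Exponents

variable {n q : ℕ}

def expandExponent (q : ℕ) (e : Fin (n + 1) →₀ ℕ) : Fin (n + 1) →₀ ℕ :=
  e.update 0 (q * e 0)

def contractExponent (q : ℕ) (d : Fin (n + 1) →₀ ℕ) : Fin (n + 1) →₀ ℕ :=
  d.update 0 (d 0 / q)

@[simp] lemma expandExponent_apply_zero (e : Fin (n + 1) →₀ ℕ) :
    expandExponent q e 0 = q * e 0 := by
  simp [expandExponent]

@[simp] lemma expandExponent_apply_succ (e : Fin (n + 1) →₀ ℕ) (i : Fin n) :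
    expandExponent q e i.succ = e i.succ := by
  simp [expandExponent, Finsupp.update_apply, Fin.succ_ne_zero]

lemma contractExponent_expandExponent [NeZero q] (e : Fin (n + 1) →₀ ℕ) :
    contractExponent q (expandExponent q e) = e := by
  ext i
  cases i using Fin.cases <;> simp [contractExponent, NeZero.pos q]

lemma expandExponent_contractExponent {d : Fin (n + 1) →₀ ℕ} (h : q ∣ d 0) :
    expandExponent q (contractExponent q d) = d := by
  ext i
  cases i using Fin.cases <;> simp [contractExponent, Nat.mul_div_cancel' h]

lemma expandExponent_injective [NeZero q] :
    Function.Injective (expandExponent (n := n) q) :=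
  Function.LeftInverse.injective contractExponent_expandExponent

lemma eq_expandExponent_iff [NeZero q] {d e : Fin (n + 1) →₀ ℕ} :
    d = expandExponent q e ↔ q ∣ d 0 ∧ contractExponent q d = e := by
  constructor
  · rintro rfl
    simp [contractExponent_expandExponent]
  · rintro ⟨h, rfl⟩
    exact (expandExponent_contractExponent h).symm

lemma degree_expandExponent (e : Fin (n + 1) →₀ ℕ) :
    (expandExponent q e).degree = q * e 0 + ∑ i : Fin n, e i.succ := by
  simp [Finsupp.degree_eq_sum, Fin.sum_univ_succ]

lemma degree_le_degree_expandExponent [NeZero q] (e : Fin (n + 1) →₀ ℕ) :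
    e.degree ≤ (expandExponent q e).degree := by
  rw [degree_expandExponent, Finsupp.degree_eq_sum, Fin.sum_univ_succ]
  gcongr
  exact Nat.le_mul_of_pos_left _ (NeZero.pos q)

lemma degree_expandExponent_le [NeZero q] (e : Fin (n + 1) →₀ ℕ) :
    (expandExponent q e).degree ≤ q * e.degree := by
  rw [degree_expandExponent, Finsupp.degree_eq_sum, Fin.sum_univ_succ, mul_add]
  gcongr
  exact Nat.le_mul_of_pos_left _ (NeZero.pos q)

lemma le_and_dvd_sub_iff_mod_eq {m j : ℕ} (hj : j < q) :
    j ≤ m ∧ q ∣ m - j ↔ m % q = j := by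
  constructor
  · rintro ⟨hle, hdvd⟩
    rw [← (Nat.modEq_iff_dvd' hle).2 hdvd, Nat.mod_eq_of_lt hj]
  · rintro rfl
    exact ⟨Nat.mod_le _ _, Nat.dvd_sub_mod m⟩

end Exponents

section PowerSeries

variable {n q : ℕ}

lemma coeff_expandY (f : MvPowerSeries (Fin (n + 1)) k) (d : Fin (n + 1) →₀ ℕ) :
    coeff d (expandY q f) = if q ∣ d 0 then coeff (contractExponent q d) f else 0 :=
  rfl

lemma coeff_expandY_expandExponent [NeZero q] (f : MvPowerSeries (Fin (n + 1)) k)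
    (e : Fin (n + 1) →₀ ℕ) : coeff (expandExponent q e) (expandY q f) = coeff e f := by
  simp [coeff_expandY, contractExponent_expandExponent]

lemma expandY_zero : expandY (k := k) (n := n) q 0 = 0 := by
  ext d
  simp [coeff_expandY]

lemma expandY_injective [NeZero q] :
    Function.Injective (expandY (k := k) (n := n) q) := fun f g h => by
  ext e
  rw [← coeff_expandY_expandExponent (q := q) f, h, coeff_expandY_expandExponent]

def substY (q : ℕ) : Fin (n + 1) → MvPowerSeries (Fin (n + 1)) k :=
  fun i => if i = 0 then X 0 ^ q else X i

lemma hasSubst_substY [NeZero q] : HasSubst (substY (k := k) (n := n) q) :=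
  hasSubst_of_constantCoeff_zero fun i => by
    by_cases hi : i = 0 <;> simp [substY, hi, NeZero.ne q]

lemma prod_substY_pow (e : Fin (n + 1) →₀ ℕ) :
    (e.prod fun i m => substY (k := k) q i ^ m) = monomial (expandExponent q e) 1 := by
  rw [monomial_one_eq, Finsupp.prod_fintype _ _ (fun _ => pow_zero _),
    Finsupp.prod_fintype _ _ (fun _ => pow_zero _), Fin.prod_univ_succ, Fin.prod_univ_succ]
  simp [substY, Fin.succ_ne_zero, pow_mul]

lemma expandY_eq_subst [NeZero q] (f : MvPowerSeries (Fin (n + 1)) k) :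
    expandY q f = subst (substY q) f := by
  ext d
  rw [coeff_subst hasSubst_substY]
  simp_rw [prod_substY_pow, MvPowerSeries.coeff_monomial, eq_expandExponent_iff, smul_eq_mul,
    mul_ite, mul_one, mul_zero, coeff_expandY]
  split_ifs with h
  · rw [finsum_eq_single _ (contractExponent q d) fun e he => if_neg (by tauto),
      if_pos ⟨h, rfl⟩]
  · exact (finsum_eq_zero_of_forall_eq_zero fun e => if_neg (by tauto)).symm

def expandYAlgHom (q : ℕ) [NeZero q] :
    MvPowerSeries (Fin (n + 1)) k →ₐ[k] MvPowerSeries (Fin (n + 1)) k :=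
  substAlgHom (hasSubst_substY (q := q))

lemma expandYAlgHom_apply [NeZero q] (f : MvPowerSeries (Fin (n + 1)) k) :
    expandYAlgHom q f = expandY q f := by
  rw [expandYAlgHom, substAlgHom_apply, expandY_eq_subst]

lemma coe_expVar [NeZero q] (p : MvPolynomial (Fin (n + 1)) k) :
    (expVar q p : MvPowerSeries (Fin (n + 1)) k) = expandY q p := by
  rw [← expandYAlgHom_apply]
  induction p using MvPolynomial.induction_on with
  | C a =>
    have h := (expandYAlgHom (n := n) q).commutes a
    rw [MvPowerSeries.algebraMap_apply, Algebra.algebraMap_self, RingHom.id_apply] at h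
    simp [expVar, h]
  | add p r hp hr => simp [hp, hr]
  | mul_X p i hp =>
    simp only [map_mul, MvPolynomial.coe_mul, hp, MvPolynomial.coe_X]
    congr 1
    by_cases hi : i = 0 <;> simp [expVar, expandYAlgHom, subst_X hasSubst_substY, substY, hi]

end PowerSeries

section Polynomials

variable {n q : ℕ} [NeZero q]

lemma coeff_expVar (p : MvPolynomial (Fin (n + 1)) k) (d : Fin (n + 1) →₀ ℕ) :
    (expVar q p).coeff d = if q ∣ d 0 then p.coeff (contractExponent q d) else 0 := by
  rw [← MvPolynomial.coeff_coe, coe_expVar, coeff_expandY, MvPolynomial.coeff_coe]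

lemma coeff_expVar_expandExponent (p : MvPolynomial (Fin (n + 1)) k) (e : Fin (n + 1) →₀ ℕ) :
    (expVar q p).coeff (expandExponent q e) = p.coeff e := by
  rw [← MvPolynomial.coeff_coe, coe_expVar, coeff_expandY_expandExponent, MvPolynomial.coeff_coe]

lemma expVar_injective : Function.Injective (expVar (k := k) (n := n) q) := fun p r h =>
  MvPolynomial.coe_injective _ _ <| expandY_injective (q := q) <| by
    rw [← coe_expVar, h, coe_expVar]

lemma totalDegree_le_totalDegree_expVar (p : MvPolynomial (Fin (n + 1)) k) :
    p.totalDegree ≤ (expVar q p).totalDegree :=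
  Finset.sup_le fun e he => (degree_le_degree_expandExponent e).trans <|
    MvPolynomial.le_totalDegree <| by
      rwa [MvPolynomial.mem_support_iff, coeff_expVar_expandExponent,
        ← MvPolynomial.mem_support_iff]

lemma totalDegree_expVar_le (p : MvPolynomial (Fin (n + 1)) k) :
    (expVar q p).totalDegree ≤ q * p.totalDegree := by
  refine Finset.sup_le fun d hd => ?_
  rw [MvPolynomial.mem_support_iff, coeff_expVar] at hd
  split_ifs at hd with h
  · calc d.degree = (expandExponent q (contractExponent q d)).degree := by
          rw [expandExponent_contractExponent h]
      _ ≤ q * (contractExponent q d).degree := degree_expandExponent_le _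
      _ ≤ q * p.totalDegree := by
          gcongr
          exact MvPolynomial.le_totalDegree (MvPolynomial.mem_support_iff.2 hd)
  · exact absurd rfl hd

end Polynomials

section Decomposition

variable {n q : ℕ}

lemma coeff_X_pow_mul_expandY {j : ℕ} (hj : j < q) (g : MvPowerSeries (Fin (n + 1)) k)
    (d : Fin (n + 1) →₀ ℕ) :
    coeff d (X 0 ^ j * expandY q g) =
      if d 0 % q = j then coeff (contractExponent q (d - Finsupp.single 0 j)) g else 0 := by
  rw [X_pow_eq, MvPowerSeries.coeff_monomial_mul, one_mul, coeff_expandY, Finsupp.tsub_apply,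
    Finsupp.single_eq_same]
  simp_rw [Finsupp.single_le_iff, ← le_and_dvd_sub_iff_mod_eq hj, ite_and]

variable [NeZero q]

lemma coeff_X_pow_mul_expVar {j : ℕ} (hj : j < q) (p : MvPolynomial (Fin (n + 1)) k)
    (d : Fin (n + 1) →₀ ℕ) :
    (MvPolynomial.X 0 ^ j * expVar q p).coeff d =
      if d 0 % q = j then p.coeff (contractExponent q (d - Finsupp.single 0 j)) else 0 := by
  rw [← MvPolynomial.coeff_coe, MvPolynomial.coe_mul, MvPolynomial.coe_pow, MvPolynomial.coe_X,
    coe_expVar, coeff_X_pow_mul_expandY hj]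
  simp only [MvPolynomial.coeff_coe]

lemma eq_zero_of_sum_X_pow_mul_expandY_eq_zero {g : ℕ → MvPowerSeries (Fin (n + 1)) k}
    (h : ∑ j ∈ Finset.range q, X 0 ^ j * expandY q (g j) = 0) {j : ℕ} (hj : j < q) :
    g j = 0 := by
  ext e
  set D : Fin (n + 1) →₀ ℕ := expandExponent q e + Finsupp.single 0 j with hD
  have hmod : D 0 % q = j := by
    simp [hD, Nat.mod_eq_of_lt hj]
  have h' := congr_arg (MvPowerSeries.coeff D) h
  rwa [map_sum, Finset.sum_eq_single_of_mem j (Finset.mem_range.2 hj) fun i hi hne => by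
      rw [coeff_X_pow_mul_expandY (Finset.mem_range.1 hi), hmod, if_neg (Ne.symm hne)],
    coeff_X_pow_mul_expandY hj, if_pos hmod, add_tsub_cancel_right,
    contractExponent_expandExponent, map_zero] at h'

lemma eq_zero_of_sum_X_pow_mul_expVar_eq_zero {t : ℕ → MvPolynomial (Fin (n + 1)) k}
    (h : ∑ j ∈ Finset.range q, MvPolynomial.X 0 ^ j * expVar q (t j) = 0) {j : ℕ}
    (hj : j < q) : t j = 0 := by
  have h' := congr_arg (MvPolynomial.coeToMvPowerSeries.ringHom (σ := Fin (n + 1)) (R := k)) h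
  simp only [map_sum, map_mul, map_pow, map_zero, MvPolynomial.coeToMvPowerSeries.ringHom_apply,
    MvPolynomial.coe_X, coe_expVar] at h'
  exact MvPolynomial.coe_eq_zero_iff.1 (eq_zero_of_sum_X_pow_mul_expandY_eq_zero h' hj)

def expVarComponent (q : ℕ) [NeZero q] (j : ℕ) (p : MvPolynomial (Fin (n + 1)) k) :
    MvPolynomial (Fin (n + 1)) k :=
  AddMonoidAlgebra.ofCoeff <| (AddMonoidAlgebra.coeff p).comapDomain
    (fun e => expandExponent q e + Finsupp.single 0 j)
    ((add_left_injective _).comp expandExponent_injective).injOn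

lemma coeff_expVarComponent (j : ℕ) (p : MvPolynomial (Fin (n + 1)) k)
    (e : Fin (n + 1) →₀ ℕ) :
    (expVarComponent q j p).coeff e = p.coeff (expandExponent q e + Finsupp.single 0 j) :=
  rfl

lemma sum_X_pow_mul_expVar_expVarComponent (p : MvPolynomial (Fin (n + 1)) k) :
    ∑ j ∈ Finset.range q, MvPolynomial.X 0 ^ j * expVar q (expVarComponent q j p) = p := by
  ext d
  have hd : d 0 % q < q := Nat.mod_lt _ (NeZero.pos q)
  have hle : Finsupp.single 0 (d 0 % q) ≤ d := Finsupp.single_le_iff.2 (Nat.mod_le _ _)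
  have hdvd : q ∣ (d - Finsupp.single 0 (d 0 % q) : Fin (n + 1) →₀ ℕ) 0 := by
    simpa using Nat.dvd_sub_mod (d 0)
  rw [MvPolynomial.coeff_sum, Finset.sum_eq_single_of_mem _ (Finset.mem_range.2 hd)
      fun j hj hne => by rw [coeff_X_pow_mul_expVar (Finset.mem_range.1 hj), if_neg (Ne.symm hne)],
    coeff_X_pow_mul_expVar hd, if_pos rfl, coeff_expVarComponent,
    expandExponent_contractExponent hdvd, tsub_add_cancel_of_le hle]

end Decomposition

section PolynomialsOverPolynomials

variable {n q : ℕ}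

lemma coeff_C_X_pow_mul_map_expVar (j : ℕ) (Q : Polynomial (MvPolynomial (Fin (n + 1)) k))
    (m : ℕ) :
    (Polynomial.C (MvPolynomial.X 0) ^ j * Q.map (expVar q).toRingHom).coeff m =
      MvPolynomial.X 0 ^ j * expVar q (Q.coeff m) := by
  rw [← Polynomial.C_pow, Polynomial.coeff_C_mul, Polynomial.coeff_map]
  rfl

variable [NeZero q]

lemma expVarComponent_zero (j : ℕ) : expVarComponent (k := k) (n := n) q j 0 = 0 := by
  ext e
  simp [coeff_expVarComponent]

def expVarComponentPoly (q : ℕ) [NeZero q] (j : ℕ)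
    (Q : Polynomial (MvPolynomial (Fin (n + 1)) k)) :
    Polynomial (MvPolynomial (Fin (n + 1)) k) :=
  ∑ m ∈ Q.support, monomial m (expVarComponent q j (Q.coeff m))

lemma coeff_expVarComponentPoly (j : ℕ) (Q : Polynomial (MvPolynomial (Fin (n + 1)) k))
    (m : ℕ) :
    (expVarComponentPoly q j Q).coeff m = expVarComponent q j (Q.coeff m) := by
  simp only [expVarComponentPoly, finsetSum_coeff, Polynomial.coeff_monomial, Finset.sum_ite_eq',
    ite_eq_left_iff, notMem_support_iff]
  intro h
  rw [h, expVarComponent_zero]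

lemma sum_C_X_pow_mul_map_expVarComponentPoly (Q : Polynomial (MvPolynomial (Fin (n + 1)) k)) :
    ∑ j ∈ Finset.range q, Polynomial.C (MvPolynomial.X 0) ^ j *
      (expVarComponentPoly q j Q).map (expVar q).toRingHom = Q := by
  refine Polynomial.ext fun m => ?_
  simp only [finsetSum_coeff, coeff_C_X_pow_mul_map_expVar, coeff_expVarComponentPoly,
    sum_X_pow_mul_expVar_expVarComponent]

lemma eq_zero_of_sum_C_X_pow_mul_map_expVar_eq_zero
    {t : ℕ → Polynomial (MvPolynomial (Fin (n + 1)) k)}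
    (h : ∑ j ∈ Finset.range q,
      Polynomial.C (MvPolynomial.X 0) ^ j * (t j).map (expVar q).toRingHom = 0)
    {j : ℕ} (hj : j < q) : t j = 0 := by
  refine Polynomial.ext fun m => ?_
  have h' := congr_arg (Polynomial.coeff · m) h
  simp only [finsetSum_coeff, coeff_C_X_pow_mul_map_expVar, Polynomial.coeff_zero] at h'
  rw [eq_zero_of_sum_X_pow_mul_expVar_eq_zero h' hj, Polynomial.coeff_zero]

end PolynomialsOverPolynomials

lemma pEval_eq_eval₂ (P : Polynomial (MvPolynomial σ k)) (f : MvPowerSeries σ k) :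
    pEval P f = P.eval₂ MvPolynomial.coeToMvPowerSeries.ringHom f :=
  eval_map _ _

lemma heightP_le_iff (P : Polynomial (MvPolynomial σ k)) (N : ℕ) :
    heightP P ≤ N ↔ ∀ i, (P.coeff i).totalDegree ≤ N := by
  refine ⟨fun h i => ?_, fun h => Finset.sup_le fun i _ => h i⟩
  by_cases hi : i ≤ P.natDegree
  · exact (Finset.le_sup (f := fun i => (P.coeff i).totalDegree)
      (Finset.mem_range_succ_iff.2 hi)).trans h
  · simp [coeff_eq_zero_of_natDegree_lt (not_le.1 hi)]

section MinimalPolynomial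

variable {n q : ℕ} [NeZero q]

lemma pEval_map_expVar (P : Polynomial (MvPolynomial (Fin (n + 1)) k))
    (f : MvPowerSeries (Fin (n + 1)) k) :
    pEval (P.map (expVar q).toRingHom) (expandY q f) = expandY q (pEval P f) := by
  have hcomm : MvPolynomial.coeToMvPowerSeries.ringHom.comp (expVar (n := n) q).toRingHom =
      (expandYAlgHom q).toRingHom.comp (MvPolynomial.coeToMvPowerSeries.ringHom (R := k)) :=
    RingHom.ext fun p => (coe_expVar p).trans (expandYAlgHom_apply _).symm
  rw [pEval_eq_eval₂, pEval_eq_eval₂, eval₂_map, hcomm, ← expandYAlgHom_apply,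
    ← expandYAlgHom_apply]
  exact (hom_eval₂ P _ _ f).symm

lemma pEval_expandY_eq_sum (Q : Polynomial (MvPolynomial (Fin (n + 1)) k))
    (f : MvPowerSeries (Fin (n + 1)) k) :
    pEval Q (expandY q f) = ∑ j ∈ Finset.range q,
      X 0 ^ j * expandY q (pEval (expVarComponentPoly q j Q) f) := by
  conv_lhs => rw [← sum_C_X_pow_mul_map_expVarComponentPoly (q := q) Q]
  rw [pEval_eq_eval₂, eval₂_finsetSum]
  refine Finset.sum_congr rfl fun j _ => ?_
  rw [eval₂_mul, eval₂_pow, Polynomial.eval₂_C, ← pEval_eq_eval₂, pEval_map_expVar,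
    MvPolynomial.coeToMvPowerSeries.ringHom_apply, MvPolynomial.coe_X]

lemma map_expVar_dvd_of_pEval_expandY_eq_zero {P Q : Polynomial (MvPolynomial (Fin (n + 1)) k)}
    {f : MvPowerSeries (Fin (n + 1)) k} (hP : IsMinPolyOf P f)
    (hQ : pEval Q (expandY q f) = 0) : P.map (expVar q).toRingHom ∣ Q := by
  rw [pEval_expandY_eq_sum] at hQ
  rw [← sum_C_X_pow_mul_map_expVarComponentPoly (q := q) Q]
  refine Finset.dvd_sum fun j hj => dvd_mul_of_dvd_right (Polynomial.map_dvd _ (hP.2.2 _ ?_)) _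
  exact eq_zero_of_sum_X_pow_mul_expandY_eq_zero hQ (Finset.mem_range.1 hj)

/-- Write `B(x, y^q, T) = A(x, y^q, T) · S` and compare the `0`-th components of both sides:
`B = A · S₀`. -/
lemma dvd_of_map_expVar_dvd_map_expVar {A B : Polynomial (MvPolynomial (Fin (n + 1)) k)}
    (h : A.map (expVar q).toRingHom ∣ B.map (expVar q).toRingHom) : A ∣ B := by
  obtain ⟨S, hS⟩ := h
  set t : ℕ → Polynomial (MvPolynomial (Fin (n + 1)) k) :=
    fun j => A * expVarComponentPoly q j S - if j = 0 then B else 0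
  have hB : ∑ j ∈ Finset.range q, Polynomial.C (MvPolynomial.X 0) ^ j *
      (if j = 0 then B else 0).map (expVar q).toRingHom = B.map (expVar q).toRingHom := by
    simp [apply_ite, Finset.sum_ite_eq', NeZero.pos q]
  have ht : ∑ j ∈ Finset.range q, Polynomial.C (MvPolynomial.X 0) ^ j *
      (t j).map (expVar q).toRingHom = 0 := by
    simp only [t, Polynomial.map_sub, Polynomial.map_mul, mul_sub, Finset.sum_sub_distrib, hB,
      mul_left_comm _ (A.map _), ← Finset.mul_sum, sum_C_X_pow_mul_map_expVarComponentPoly, hS,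
      sub_self]
  have h0 := eq_zero_of_sum_C_X_pow_mul_map_expVar_eq_zero ht (NeZero.pos q)
  exact ⟨_, (sub_eq_zero.1 (by simpa [t] using h0)).symm⟩

lemma IsMinPolyOf.map_expVar {P : Polynomial (MvPolynomial (Fin (n + 1)) k)}
    {f : MvPowerSeries (Fin (n + 1)) k} (hP : IsMinPolyOf P f) :
    IsMinPolyOf (P.map (expVar q).toRingHom) (expandY q f) :=
  ⟨(Polynomial.map_ne_zero_iff expVar_injective).2 hP.1,
    by rw [pEval_map_expVar, hP.2.1, expandY_zero],
    fun _ => map_expVar_dvd_of_pEval_expandY_eq_zero hP⟩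

lemma IsMinPolyOf.of_map_expVar {R : Polynomial (MvPolynomial (Fin (n + 1)) k)}
    {f : MvPowerSeries (Fin (n + 1)) k}
    (hR : IsMinPolyOf (R.map (expVar q).toRingHom) (expandY q f)) : IsMinPolyOf R f := by
  refine ⟨fun h => hR.1 (by rw [h, Polynomial.map_zero]), ?_, fun Q hQ => ?_⟩
  · apply expandY_injective (q := q)
    rw [← pEval_map_expVar, hR.2.1, expandY_zero]
  · apply dvd_of_map_expVar_dvd_map_expVar (q := q)
    exact hR.2.2 _ (by rw [pEval_map_expVar, hQ, expandY_zero])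

lemma heightP_le_heightP_map_expVar (P : Polynomial (MvPolynomial (Fin (n + 1)) k)) :
    heightP P ≤ heightP (P.map (expVar q).toRingHom) := by
  refine (heightP_le_iff _ _).2 fun i => ?_
  have h := (heightP_le_iff (P.map (expVar q).toRingHom) _).1 le_rfl i
  rw [Polynomial.coeff_map] at h
  exact (totalDegree_le_totalDegree_expVar _).trans h

lemma heightP_map_expVar_le (P : Polynomial (MvPolynomial (Fin (n + 1)) k)) :
    heightP (P.map (expVar q).toRingHom) ≤ q * heightP P := by
  refine (heightP_le_iff _ _).2 fun i => ?_
  rw [Polynomial.coeff_map]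
  exact (totalDegree_expVar_le _).trans (Nat.mul_le_mul_left q ((heightP_le_iff P _).1 le_rfl i))

end MinimalPolynomial

/-- Let `f(x,y)` be an algebraic power series with minimal polynomial
`P(x,y,T)` and `q > 0`.  Then `f(x,y^q)` is algebraic with minimal polynomial
`P(x,y^q,T)`, same degree, and `H(f(x,y)) ≤ H(f(x,y^q)) ≤ q·H(f(x,y))`; moreover for any
`R`, `R(x,y,T)` is a minimal polynomial of `f(x,y)` iff `R(x,y^q,T)` is a minimal
polynomial of `f(x,y^q)`. -/
theorem expandY_minpoly {n : ℕ} (q : ℕ) (hq : 0 < q)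
    (f : MvPowerSeries (Fin (n + 1)) k)
    (P : Polynomial (MvPolynomial (Fin (n + 1)) k)) (hP : IsMinPolyOf P f) :
    IsMinPolyOf (P.map (expVar (k := k) q).toRingHom) (expandY q f) ∧
      (P.map (expVar (k := k) q).toRingHom).natDegree = P.natDegree ∧
      heightP P ≤ heightP (P.map (expVar (k := k) q).toRingHom) ∧
      heightP (P.map (expVar (k := k) q).toRingHom) ≤ q * heightP P ∧
      ∀ R : Polynomial (MvPolynomial (Fin (n + 1)) k),
        IsMinPolyOf R f ↔ IsMinPolyOf (R.map (expVar (k := k) q).toRingHom) (expandY q f) := by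
  have : NeZero q := ⟨hq.ne'⟩
  exact ⟨hP.map_expVar, natDegree_map_eq_of_injective expVar_injective P,
    heightP_le_heightP_map_expVar P, heightP_map_expVar_le P,
    fun R => ⟨IsMinPolyOf.map_expVar, IsMinPolyOf.of_map_expVar⟩⟩
end
end

section
/- (Localized ideal membership at a multiplicative set.) Let k be an infinite field, M a submodule of k[x₁,…,xₙ]^q generated by f₁,…,f_p, and S a multiplicatively closed subset of k[x]. Then there is a constant C > 0 depending only on M and S such that: for any f ∈ k[x]^q, f ∈ S^{−1}M if and only if there exist polynomials a₁,…,a_p of degree ≤ deg(f) + C and u ∈ S of degree ≤ C with u·f = a₁f₁ + ⋯ + a_p f_p. -/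
/-!
Let `M = ⟨f₁, …, f_p⟩ ⊆ k[x]^q`. Since `k[x]^q` is Noetherian, among the submodules
`{f | u • f ∈ M}` for `u ∈ S` there is a maximal one; its `u` then works for every `f` with
`S`-torsion image in `k[x]^q / M`, so `f ∈ S⁻¹M` iff `u • f ∈ M`, and it remains to bound
degrees in the ideal-membership problem for `M` itself.

For that, homogenize: the homogenized generators span a graded submodule `Mʰ` of
`k[x₀, x]^q`, and by Noetherianity again its saturation with respect to `x₀` is reached at a
fixed power `x₀ᴺ`. If `f ∈ M`, some power of `x₀` times the homogenization of `f` lies in `Mʰ`,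
hence so does `x₀ᴺ` times it. Taking homogeneous components of the coefficients of a
representation and dehomogenizing gives coefficients of degree `≤ deg f + N`.
-/

theorem Submodule.exists_uniform_smul_mem {R M : Type*} [CommSemiring R] [AddCommMonoid M]
    [Module R M] [IsNoetherian R M] (S : Submonoid R) (N : Submodule R M) :
    ∃ u ∈ S, ∀ f : M, (∃ v ∈ S, v • f ∈ N) → u • f ∈ N := by
  obtain ⟨_, ⟨u, rfl⟩, hmax⟩ := set_has_maximal_iff_noetherian.mpr ‹_›
    (Set.range fun u : S => N.comap (LinearMap.lsmul R M u)) (Set.range_nonempty _)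
  refine ⟨u, u.2, fun f ⟨v, hv, hvf⟩ => ?_⟩
  have hle : N.comap (LinearMap.lsmul R M u) ≤ N.comap (LinearMap.lsmul R M (u * v)) :=
    fun g hg => by simpa [mul_comm, mul_smul] using N.smul_mem v hg
  have hf : f ∈ N.comap (LinearMap.lsmul R M (u * v)) := by
    simpa [mul_smul] using N.smul_mem u hvf
  rw [← hle.eq_of_not_lt (hmax _ ⟨u * ⟨v, hv⟩, rfl⟩)] at hf
  simpa using hf

theorem Finsupp.degree_eq_apply_none_add_degree_some {σ : Type*} (v : Option σ →₀ ℕ) :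
    v.degree = v none + v.some.degree := by
  simpa [Finsupp.degree_apply, Finsupp.sum] using
    Finsupp.sum_option_index v (fun _ e => e) (fun _ => rfl) (fun _ _ _ => rfl)

theorem Finsupp.degree_optionElim {σ : Type*} (e : ℕ) (d : σ →₀ ℕ) :
    (d.optionElim e).degree = e + d.degree := by
  rw [Finsupp.degree_eq_apply_none_add_degree_some, Finsupp.optionElim_apply_none,
    Finsupp.some_optionElim]

namespace MvPolynomial

section CommSemiring

variable {R σ : Type*} [CommSemiring R]

/-- `X none` is the homogenizing variable. Monomials of degree `> D` are not homogenized
(truncated subtraction), hence the hypotheses `g.totalDegree ≤ D` below. -/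
noncomputable def homogenize (D : ℕ) : MvPolynomial σ R →ₗ[R] MvPolynomial (Option σ) R :=
  (basisMonomials σ R).constr R fun d => monomial (d.optionElim (D - d.degree)) 1

theorem homogenize_monomial (D : ℕ) (d : σ →₀ ℕ) (c : R) :
    homogenize D (monomial d c) = monomial (d.optionElim (D - d.degree)) c := by
  have h := (basisMonomials σ R).constr_basis R
    (fun d => monomial (d.optionElim (D - d.degree)) (1 : R)) d
  rw [coe_basisMonomials] at h
  rw [← mul_one c, ← smul_eq_mul, ← smul_monomial, map_smul, homogenize, h, smul_monomial]

noncomputable def dehomogenize : MvPolynomial (Option σ) R →ₐ[R] MvPolynomial σ R :=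
  aeval fun o => o.elim 1 X

@[simp]
theorem dehomogenize_X_none : dehomogenize (X none : MvPolynomial (Option σ) R) = 1 := by
  simp [dehomogenize]

theorem dehomogenize_monomial (v : Option σ →₀ ℕ) (c : R) :
    dehomogenize (monomial v c) = monomial v.some c := by
  rw [dehomogenize, aeval_monomial,
    Finsupp.prod_option_index _ _ (fun _ => pow_zero _) (fun _ _ _ => pow_add _ _ _), monomial_eq]
  simp

theorem isHomogeneous_homogenize {D : ℕ} {g : MvPolynomial σ R} (hg : g.totalDegree ≤ D) :
    (homogenize D g).IsHomogeneous D := by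
  rw [g.as_sum, map_sum]
  refine IsHomogeneous.sum _ _ _ fun d hd => ?_
  rw [homogenize_monomial]
  refine isHomogeneous_monomial _ ?_
  have : d.degree ≤ g.totalDegree := le_totalDegree hd
  rw [Finsupp.degree_optionElim]
  omega

theorem dehomogenize_homogenize (D : ℕ) (g : MvPolynomial σ R) :
    dehomogenize (homogenize D g) = g := by
  induction g using MvPolynomial.induction_on' with
  | monomial d c => rw [homogenize_monomial, dehomogenize_monomial, Finsupp.some_optionElim]
  | add p q hp hq => rw [map_add, map_add, hp, hq]

theorem homogenize_dehomogenize {D : ℕ} {h : MvPolynomial (Option σ) R}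
    (hh : h.IsHomogeneous D) : homogenize D (dehomogenize h) = h := by
  conv_lhs => rw [h.as_sum, map_sum, map_sum]
  conv_rhs => rw [h.as_sum]
  refine Finset.sum_congr rfl fun v hv => ?_
  have hD : D = v none + v.some.degree :=
    (hh.degree_eq_sum_deg_support hv).trans v.degree_eq_apply_none_add_degree_some
  rw [dehomogenize_monomial, homogenize_monomial, hD, Nat.add_sub_cancel, Finsupp.optionElim_some]

theorem totalDegree_dehomogenize_le (h : MvPolynomial (Option σ) R) :
    (dehomogenize h).totalDegree ≤ h.totalDegree := by
  conv_lhs => rw [h.as_sum, map_sum]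
  refine (totalDegree_finsetSum _ _).trans (Finset.sup_le fun v hv => ?_)
  rw [dehomogenize_monomial]
  refine (totalDegree_monomial_le _ _).trans (le_trans ?_ (le_totalDegree hv))
  change v.some.degree ≤ v.degree
  rw [v.degree_eq_apply_none_add_degree_some]
  omega

theorem X_none_pow_mul_homogenize {D : ℕ} {g : MvPolynomial σ R} (hg : g.totalDegree ≤ D)
    (s : ℕ) : X none ^ s * homogenize D g = homogenize (D + s) g := by
  have hhom :
      (X none ^ s * homogenize D g : MvPolynomial (Option σ) R).IsHomogeneous (D + s) := by
    simpa [add_comm] using ((isHomogeneous_X R none).pow s).mul (isHomogeneous_homogenize hg)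
  rw [← homogenize_dehomogenize hhom, map_mul, map_pow, dehomogenize_homogenize,
    dehomogenize_X_none, one_pow, one_mul]

theorem homogeneousComponent_mul_of_isHomogeneous_right {a b : MvPolynomial σ R} {e : ℕ}
    (hb : b.IsHomogeneous e) (m : ℕ) :
    homogeneousComponent m (a * b) =
      if e ≤ m then homogeneousComponent (m - e) a * b else 0 := by
  classical
  let := gradedAlgebra (σ := σ) (R := R)
  have key := DirectSum.coe_decompose_mul_of_right_mem (homogeneousSubmodule σ R) (a := a) m hb
  simpa only [show ∀ x k,
    (DirectSum.decompose (homogeneousSubmodule σ R) x k : MvPolynomial σ R) =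
      homogeneousComponent k x from decomposition.decompose'_apply] using key

variable {ι κ : Type*} [Fintype κ]

theorem exists_isHomogeneous_coeffs_of_mem_span {F : κ → ι → MvPolynomial σ R} {d : κ → ℕ}
    (hF : ∀ i j, (F i j).IsHomogeneous (d i)) {H : ι → MvPolynomial σ R} {m : ℕ}
    (hH : ∀ j, (H j).IsHomogeneous m)
    (hmem : H ∈ Submodule.span (MvPolynomial σ R) (Set.range F)) :
    ∃ A : κ → MvPolynomial σ R, (∀ i, (A i).IsHomogeneous (m - d i)) ∧ H = ∑ i, A i • F i := by
  classical
  obtain ⟨B, rfl⟩ := (Submodule.mem_span_range_iff_exists_fun _).mp hmem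
  refine ⟨fun i => if d i ≤ m then homogeneousComponent (m - d i) (B i) else 0, fun i => ?_, ?_⟩
  · dsimp only
    split_ifs
    · exact homogeneousComponent_isHomogeneous _ _
    · exact isHomogeneous_zero _ _ _
  · ext1 j
    rw [← homogeneousComponent_eq_self (hH j)]
    simp only [Finset.sum_apply, Pi.smul_apply, smul_eq_mul, map_sum,
      homogeneousComponent_mul_of_isHomogeneous_right (hF _ j), ite_mul, zero_mul]

theorem exists_X_none_pow_smul_homogenize_mem_span {F : κ → ι → MvPolynomial σ R} {d : κ → ℕ}
    (hF : ∀ i j, (F i j).totalDegree ≤ d i) {f : ι → MvPolynomial σ R} {D : ℕ}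
    (hf : ∀ j, (f j).totalDegree ≤ D)
    (hmem : f ∈ Submodule.span (MvPolynomial σ R) (Set.range F)) :
    ∃ s, (X none : MvPolynomial (Option σ) R) ^ s • (fun j => homogenize D (f j)) ∈
      Submodule.span (MvPolynomial (Option σ) R)
        (Set.range fun i j => homogenize (d i) (F i j)) := by
  classical
  obtain ⟨b, hb⟩ := (Submodule.mem_span_range_iff_exists_fun _).mp hmem
  set E := Finset.univ.sup fun i => (b i).totalDegree
  set D' := Finset.univ.sup d
  set c : κ → MvPolynomial (Option σ) R := fun i => X none ^ (D + D' - d i) * homogenize E (b i)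
  have key : (X none : MvPolynomial (Option σ) R) ^ (E + D') • (fun j => homogenize D (f j)) =
      ∑ i, c i • fun j => homogenize (d i) (F i j) := by
    ext1 j
    simp only [Pi.smul_apply, Finset.sum_apply, smul_eq_mul]
    have hhom : (∑ i, c i * homogenize (d i) (F i j)).IsHomogeneous (D + (E + D')) := by
      refine IsHomogeneous.sum _ _ _ fun i _ => ?_
      have hdi : d i ≤ D' := Finset.le_sup (Finset.mem_univ i)
      convert (((isHomogeneous_X R none).pow _).mul (isHomogeneous_homogenize
        (Finset.le_sup (f := fun i => (b i).totalDegree) (Finset.mem_univ i)))).mul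
        (isHomogeneous_homogenize (hF i j)) using 1
      omega
    have hde : dehomogenize (∑ i, c i * homogenize (d i) (F i j)) = f j := by
      simp only [c, ← hb, Finset.sum_apply, Pi.smul_apply, smul_eq_mul, map_sum, map_mul,
        map_pow, dehomogenize_X_none, one_pow, one_mul, dehomogenize_homogenize]
    rw [X_none_pow_mul_homogenize (hf j), ← hde, homogenize_dehomogenize hhom]
  refine ⟨E + D', key ▸ ?_⟩
  exact Submodule.sum_mem _ fun i _ => Submodule.smul_mem _ _ (Submodule.subset_span ⟨i, rfl⟩)

theorem sup_totalDegree_smul_le [Fintype ι] (u : MvPolynomial σ R) (f : ι → MvPolynomial σ R) :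
    (Finset.univ.sup fun j => (u • f) j |>.totalDegree) ≤
      u.totalDegree + Finset.univ.sup fun j => (f j).totalDegree :=
  Finset.sup_le fun j _ => (totalDegree_mul _ _).trans
    (Nat.add_le_add_left
      (Finset.le_sup (f := fun j => (f j).totalDegree) (Finset.mem_univ j)) _)

end CommSemiring

section Noetherian

variable {R σ ι κ : Type*} [CommRing R] [IsNoetherianRing R] [Finite σ] [Fintype ι] [Fintype κ]

theorem exists_totalDegree_le_add_of_mem_span (F : κ → ι → MvPolynomial σ R) :
    ∃ C : ℕ, ∀ f ∈ Submodule.span (MvPolynomial σ R) (Set.range F),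
      ∃ a : κ → MvPolynomial σ R,
        (∀ i, (a i).totalDegree ≤ (Finset.univ.sup fun j => (f j).totalDegree) + C) ∧
        f = ∑ i, a i • F i := by
  classical
  set d : κ → ℕ := fun i => Finset.univ.sup fun j => (F i j).totalDegree
  have hFd : ∀ i j, (F i j).totalDegree ≤ d i := fun i j =>
    Finset.le_sup (f := fun j => (F i j).totalDegree) (Finset.mem_univ j)
  set Mh := Submodule.span (MvPolynomial (Option σ) R)
    (Set.range fun i j => homogenize (d i) (F i j))
  obtain ⟨_, ⟨N, rfl⟩, hN⟩ := Mh.exists_uniform_smul_mem (Submonoid.powers (X none))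
  refine ⟨N, fun f hf => ?_⟩
  set df := Finset.univ.sup fun j => (f j).totalDegree
  have hfd : ∀ j, (f j).totalDegree ≤ df := fun j =>
    Finset.le_sup (f := fun j => (f j).totalDegree) (Finset.mem_univ j)
  have hmem : (fun j => homogenize (df + N) (f j)) ∈ Mh := by
    obtain ⟨s, hs⟩ := exists_X_none_pow_smul_homogenize_mem_span hFd hfd hf
    convert hN _ ⟨_, ⟨s, rfl⟩, hs⟩ using 1
    ext1 j
    rw [Pi.smul_apply, smul_eq_mul, X_none_pow_mul_homogenize (hfd j)]
  obtain ⟨A, hA, hfA⟩ := exists_isHomogeneous_coeffs_of_mem_span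
    (F := fun i j => homogenize (d i) (F i j)) (fun i j => isHomogeneous_homogenize (hFd i j))
    (fun j => isHomogeneous_homogenize ((hfd j).trans (Nat.le_add_right _ _))) hmem
  refine ⟨fun i => dehomogenize (A i), fun i => ?_, ?_⟩
  · exact (totalDegree_dehomogenize_le _).trans ((hA i).totalDegree_le.trans (Nat.sub_le _ _))
  · ext1 j
    simpa [Finset.sum_apply, dehomogenize_homogenize] using
      congrArg (dehomogenize ·) (congrFun hfA j)

end Noetherian

end MvPolynomial

theorem localized_ideal_membership_bound_general (k : Type*) [Field k]
    (n q p : ℕ) (fi : Fin p → (Fin q → MvPolynomial (Fin n) k))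
    (S : Submonoid (MvPolynomial (Fin n) k)) :
    ∃ C : ℕ, 0 < C ∧
      ∀ f : Fin q → MvPolynomial (Fin n) k,
        ((∃ u ∈ S, u • f ∈ Submodule.span (MvPolynomial (Fin n) k) (Set.range fi)) ↔
          (∃ (a : Fin p → MvPolynomial (Fin n) k) (u : MvPolynomial (Fin n) k),
            u ∈ S ∧ u.totalDegree ≤ C ∧
            (∀ i, (a i).totalDegree ≤
              (Finset.univ.sup fun j => (f j).totalDegree) + C) ∧
            u • f = ∑ i, a i • fi i)) := by
  obtain ⟨C, hC⟩ := MvPolynomial.exists_totalDegree_le_add_of_mem_span fi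
  obtain ⟨u, huS, hu⟩ :=
    (Submodule.span (MvPolynomial (Fin n) k) (Set.range fi)).exists_uniform_smul_mem S
  refine ⟨C + u.totalDegree + 1, by omega, fun f => ⟨fun hf => ?_, ?_⟩⟩
  · obtain ⟨a, ha, hfa⟩ := hC (u • f) (hu f hf)
    have hdeg := MvPolynomial.sup_totalDegree_smul_le u f
    exact ⟨a, u, huS, by omega, fun i => by have := ha i; omega, hfa⟩
  · rintro ⟨a, v, hvS, -, -, hv⟩
    exact ⟨v, hvS, (Submodule.mem_span_range_iff_exists_fun _).mpr ⟨a, hv.symm⟩⟩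

/-- **localized ideal membership at a multiplicative set.** Let `k` be an
infinite field, `M ⊆ k[x₁,…,xₙ]^q` a submodule generated by `f₁,…,f_p`, and `S` a
multiplicatively closed subset of `k[x]`.  There is a constant `C > 0` (depending only on
`M` and `S`) such that for every `f ∈ k[x]^q`: `f ∈ S⁻¹M` (i.e. `u • f ∈ M` for some
`u ∈ S`) if and only if `u·f = ∑ aᵢ·fᵢ` for some polynomials `aᵢ` of degree
`≤ deg f + C` and some `u ∈ S` of degree `≤ C`. -/
theorem localized_ideal_membership_bound (k : Type*) [Field k] [Infinite k]
    (n q p : ℕ) (fi : Fin p → (Fin q → MvPolynomial (Fin n) k))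
    (S : Submonoid (MvPolynomial (Fin n) k)) :
    ∃ C : ℕ, 0 < C ∧
      ∀ f : Fin q → MvPolynomial (Fin n) k,
        ((∃ u ∈ S, u • f ∈ Submodule.span (MvPolynomial (Fin n) k) (Set.range fi)) ↔
          (∃ (a : Fin p → MvPolynomial (Fin n) k) (u : MvPolynomial (Fin n) k),
            u ∈ S ∧ u.totalDegree ≤ C ∧
            (∀ i, (a i).totalDegree ≤
              (Finset.univ.sup fun j => (f j).totalDegree) + C) ∧
            u • f = ∑ i, a i • fi i)) :=
  localized_ideal_membership_bound_general k n q p fi S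
end
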